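/- Let b > 0. Let r₁ = [[−1, 0, 0],[0, 1, −1],[0, 1, 0]] (the Pappus matrix r₁ with parameters c = d = 0), let r₂ = [[−1, 0, 0],[0, 0, −1],[0, 1, 1]] (the Pappus matrix r₂ with c = d = 0), let Σ = [[1,0,0],[0,(1+b²)/(2b),(b²−1)/(2b)],[0,(b²−1)/(2b),(1+b²)/(2b)]] (the morphing matrix with a = 1), and let R₂ = Σ⁻¹·r₂·Σ. Then trace(r₁·R₂) = −(3b²−1)²/(4b²). -/
import Mathlib


open Matrix

def r1 : Matrix (Fin 3) (Fin 3) ℝ :=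
  !![-1, 0, 0;
     0, 1, -1;
     0, 1, 0]

def r2 : Matrix (Fin 3) (Fin 3) ℝ :=
  !![-1, 0, 0;
     0, 0, -1;
     0, 1, 1]

noncomputable def Sig (b : ℝ) : Matrix (Fin 3) (Fin 3) ℝ :=
  !![1, 0, 0;
     0, (1 + b^2) / (2*b), (b^2 - 1) / (2*b);
     0, (b^2 - 1) / (2*b), (1 + b^2) / (2*b)]

noncomputable def SigInv (b : ℝ) : Matrix (Fin 3) (Fin 3) ℝ :=
  !![1, 0, 0;
     0, (1 + b^2) / (2*b), -((b^2 - 1) / (2*b));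
     0, -((b^2 - 1) / (2*b)), (1 + b^2) / (2*b)]

lemma sig_inv (b : ℝ) (hb : 0 < b) : (Sig b)⁻¹ = SigInv b := by
  have hb' : (2*b) ≠ 0 := by positivity
  apply inv_eq_right_inv
  ext i j
  fin_cases i <;> fin_cases j <;>
    simp [Sig, SigInv, Matrix.mul_apply, Fin.sum_univ_succ, Matrix.one_apply] <;>
    field_simp <;> ring

theorem line_preserving_trace (b : ℝ) (hb : 0 < b) :
    (r1 * ((Sig b)⁻¹ * r2 * Sig b)).trace = -(3*b^2 - 1)^2 / (4*b^2) := by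
  have hb' : (2*b) ≠ 0 := by positivity
  rw [sig_inv b hb]
  simp [Matrix.trace, Matrix.diag, Matrix.mul_apply, Fin.sum_univ_succ, r1, r2, Sig, SigInv]
  field_simp
  ring
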